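/- arXiv:2106.06177 — 4 statements merged into one kernel-verified Lean document; each statement's English description precedes it below -/
import Mathlib

section
/- Let σ_1, ..., σ_d be nonnegative reals with σ_1 + ... + σ_d = 1, and let P_k denote the k-th elementary symmetric polynomial in σ_1, ..., σ_d. Then for every k ≥ 1, P_k ≥ (k+1)·P_{k+1}. -/
open Finset

theorem esymm_decreasing (d : ℕ) (σ : Fin d → ℝ) (hσ : ∀ i, 0 ≤ σ i)
    (hsum : ∑ i, σ i = 1) (k : ℕ) (hk : 1 ≤ k) :
    (k + 1 : ℝ) * ∑ A ∈ Finset.univ.powersetCard (k + 1), ∏ i ∈ A, σ i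
      ≤ ∑ A ∈ Finset.univ.powersetCard k, ∏ i ∈ A, σ i := by
  have hL : (k + 1 : ℝ) * ∑ A ∈ Finset.univ.powersetCard (k + 1), ∏ i ∈ A, σ i
      = ∑ B ∈ Finset.univ.powersetCard (k+1), ∑ i ∈ B, ∏ j ∈ B, σ j := by
    rw [Finset.mul_sum]
    refine Finset.sum_congr rfl fun B hB => ?_
    rw [Finset.sum_const, nsmul_eq_mul, (Finset.mem_powersetCard.mp hB).2]
    push_cast; ring
  have hbij : ∑ B ∈ Finset.univ.powersetCard (k+1), ∑ i ∈ B, ∏ j ∈ B, σ j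
      = ∑ A ∈ Finset.univ.powersetCard k, ∑ i ∈ Aᶜ, σ i * ∏ j ∈ A, σ j := by
    rw [Finset.sum_sigma', Finset.sum_sigma']
    refine Finset.sum_nbij' (i := fun p => ⟨p.1.erase p.2, p.2⟩)
      (j := fun p => ⟨insert p.2 p.1, p.2⟩) ?_ ?_ ?_ ?_ ?_
    · rintro ⟨B, i⟩ hp
      simp only [Finset.mem_sigma, Finset.mem_powersetCard_univ] at hp ⊢
      obtain ⟨hB, hi⟩ := hp
      constructor
      · rw [Finset.card_erase_of_mem hi, hB]; omega
      · simp [Finset.mem_compl]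
    · rintro ⟨A, i⟩ hp
      simp only [Finset.mem_sigma, Finset.mem_powersetCard_univ, Finset.mem_compl] at hp ⊢
      obtain ⟨hA, hi⟩ := hp
      exact ⟨by rw [Finset.card_insert_of_notMem hi, hA], Finset.mem_insert_self _ _⟩
    · rintro ⟨B, i⟩ hp
      simp only [Finset.mem_sigma, Finset.mem_powersetCard_univ] at hp
      simp [Finset.insert_erase hp.2]
    · rintro ⟨A, i⟩ hp
      simp only [Finset.mem_sigma, Finset.mem_powersetCard_univ, Finset.mem_compl] at hp
      simp [Finset.erase_insert hp.2]
    · rintro ⟨B, i⟩ hp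
      simp only [Finset.mem_sigma, Finset.mem_powersetCard_univ] at hp
      exact (Finset.mul_prod_erase B σ hp.2).symm
  have hR : ∑ A ∈ Finset.univ.powersetCard k, ∏ i ∈ A, σ i
      = ∑ A ∈ Finset.univ.powersetCard k,
          ((∑ i ∈ Aᶜ, σ i * ∏ j ∈ A, σ j) + ∑ i ∈ A, σ i * ∏ j ∈ A, σ j) := by
    refine Finset.sum_congr rfl fun A _ => ?_
    have : (∑ i ∈ Aᶜ, σ i * ∏ j ∈ A, σ j) + ∑ i ∈ A, σ i * ∏ j ∈ A, σ j
        = ∑ i, σ i * ∏ j ∈ A, σ j := by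
      rw [add_comm, Finset.sum_add_sum_compl]
    rw [this, ← Finset.sum_mul, hsum, one_mul]
  have hnn : 0 ≤ ∑ A ∈ Finset.univ.powersetCard k, ∑ i ∈ A, σ i * ∏ j ∈ A, σ j := by
    refine Finset.sum_nonneg fun A _ => Finset.sum_nonneg fun i _ => ?_
    exact mul_nonneg (hσ i) (Finset.prod_nonneg fun j _ => hσ j)
  rw [hL, hbij, hR, Finset.sum_add_distrib]
  linarith
end

section
/- Let σ_1, ..., σ_d be nonnegative reals with σ_1 + ... + σ_d = 1, and let α ∈ (0,1). Then ∑_{k=2}^d (-α)^k P_k(σ_1,...,σ_d) ≥ 0, where P_k is the k-th elementary symmetric polynomial. -/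
open Finset

lemma esymm_succ_le (d k : ℕ) (σ : Fin d → ℝ) (hσ : ∀ i, 0 ≤ σ i)
    (hsum : ∑ i, σ i = 1) :
    ∑ A ∈ Finset.univ.powersetCard (k+1), ∏ i ∈ A, σ i ≤
      ∑ A ∈ Finset.univ.powersetCard k, ∏ i ∈ A, σ i := by
  have hA : ∀ A : Finset (Fin d), 0 ≤ ∏ i ∈ A, σ i :=
    fun A => Finset.prod_nonneg fun i _ => hσ i
  have key : ∑ B ∈ Finset.univ.powersetCard (k+1), ∑ i ∈ B, ∏ j ∈ B, σ j ≤
      ∑ A ∈ Finset.univ.powersetCard k, ∏ i ∈ A, σ i := by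
    calc ∑ B ∈ Finset.univ.powersetCard (k+1), ∑ i ∈ B, ∏ j ∈ B, σ j
        = ∑ A ∈ Finset.univ.powersetCard k, ∑ i ∈ Aᶜ, σ i * ∏ j ∈ A, σ j := by
          rw [Finset.sum_sigma', Finset.sum_sigma']
          refine Finset.sum_nbij' (fun p => ⟨p.1.erase p.2, p.2⟩)
            (fun p => ⟨insert p.2 p.1, p.2⟩) ?_ ?_ ?_ ?_ ?_
          · rintro ⟨B, i⟩ hp
            simp only [Finset.mem_sigma, Finset.mem_powersetCard_univ] at hp ⊢
            exact ⟨by rw [Finset.card_erase_of_mem hp.2, hp.1]; rfl, by simp⟩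
          · rintro ⟨A, i⟩ hp
            simp only [Finset.mem_sigma, Finset.mem_powersetCard_univ, Finset.mem_compl] at hp ⊢
            exact ⟨by rw [Finset.card_insert_of_notMem hp.2, hp.1], Finset.mem_insert_self _ _⟩
          · rintro ⟨B, i⟩ hp
            simp only [Finset.mem_sigma, Finset.mem_powersetCard_univ] at hp
            simp [Finset.insert_erase hp.2]
          · rintro ⟨A, i⟩ hp
            simp only [Finset.mem_sigma, Finset.mem_powersetCard_univ, Finset.mem_compl] at hp
            simp [Finset.erase_insert hp.2]
          · rintro ⟨B, i⟩ hp
            simp only [Finset.mem_sigma, Finset.mem_powersetCard_univ] at hp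
            rw [← Finset.prod_insert (Finset.notMem_erase i B), Finset.insert_erase hp.2]
      _ ≤ ∑ A ∈ Finset.univ.powersetCard k, ∑ i, σ i * ∏ j ∈ A, σ j := by
          refine Finset.sum_le_sum fun A _ => ?_
          refine Finset.sum_le_sum_of_subset_of_nonneg (Finset.subset_univ _) ?_
          exact fun i _ _ => mul_nonneg (hσ i) (hA A)
      _ = ∑ A ∈ Finset.univ.powersetCard k, ∏ i ∈ A, σ i := by
          refine Finset.sum_congr rfl fun A _ => ?_
          rw [← Finset.sum_mul, hsum, one_mul]
  refine le_trans ?_ key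
  refine Finset.sum_le_sum fun B hB => ?_
  rw [Finset.mem_powersetCard_univ] at hB
  rw [Finset.sum_const, hB, nsmul_eq_mul]
  have h1 : (1:ℝ) ≤ ((k+1 : ℕ) : ℝ) := by exact_mod_cast Nat.succ_le_succ (Nat.zero_le k)
  nlinarith [hA B]

lemma alt_aux (g : ℕ → ℝ) (hg0 : ∀ k, 0 ≤ g k) (hmono : ∀ k, g (k+1) ≤ g k)
    (α : ℝ) (hα : α ∈ Set.Ioo (0 : ℝ) 1) :
    ∀ N, 0 ≤ ∑ k ∈ Finset.Icc 2 N, (-α) ^ k * g k := by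
  obtain ⟨hα0, hα1⟩ := hα
  have hpow : ∀ k : ℕ, α ^ (k+1) ≤ α ^ k := fun k =>
    pow_le_pow_of_le_one hα0.le hα1.le (Nat.le_succ k)
  intro N
  induction N using Nat.strong_induction_on with
  | _ N ih =>
    match N with
    | 0 => simp
    | 1 => simp
    | 2 =>
      simp only [show Finset.Icc 2 2 = {2} from rfl, Finset.sum_singleton]
      rw [show ((-α)^2) = α^2 by ring]
      exact mul_nonneg (by positivity) (hg0 2)
    | (n+3) =>
      rcases Nat.even_or_odd (n+3) with he | ho
      · rw [Finset.sum_Icc_succ_top (by omega)]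
        have : 0 ≤ (-α) ^ (n+3) * g (n+3) := by
          rw [he.neg_pow]
          exact mul_nonneg (pow_nonneg hα0.le _) (hg0 _)
        have := ih (n+2) (by omega)
        linarith
      · rw [Finset.sum_Icc_succ_top (by omega : 2 ≤ n+3),
          Finset.sum_Icc_succ_top (by omega : 2 ≤ n+2)]
        have hev : Even (n+2) := by
          rcases ho with ⟨m, hm⟩; exact ⟨m, by omega⟩
        have h1 : (-α) ^ (n+2) * g (n+2) = α ^ (n+2) * g (n+2) := by rw [hev.neg_pow]
        have h2 : (-α) ^ (n+3) * g (n+3) = -(α ^ (n+3) * g (n+3)) := by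
          rw [ho.neg_pow]; ring
        have h3 : α ^ (n+3) * g (n+3) ≤ α ^ (n+2) * g (n+2) :=
          mul_le_mul (hpow _) (hmono _) (hg0 _) (by positivity)
        have := ih (n+1) (by omega)
        linarith

theorem alternating_esymm_sum_nonneg (d : ℕ) (σ : Fin d → ℝ) (hσ : ∀ i, 0 ≤ σ i)
    (hsum : ∑ i, σ i = 1) (α : ℝ) (hα : α ∈ Set.Ioo (0 : ℝ) 1) :
    0 ≤ ∑ k ∈ Finset.Icc 2 d,
      (-α) ^ k * ∑ A ∈ Finset.univ.powersetCard k, ∏ i ∈ A, σ i := by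
  exact alt_aux (fun k => ∑ A ∈ Finset.univ.powersetCard k, ∏ i ∈ A, σ i)
    (fun k => Finset.sum_nonneg fun A _ => Finset.prod_nonneg fun i _ => hσ i)
    (fun k => esymm_succ_le d k σ hσ hsum) α hα d
end

section
/- Let K > 1, α = 1 - 1/K, and let B be a real symmetric positive semidefinite d×d matrix with trace 1 and operator norm at most 1. Then ‖I - αB‖^d ≤ K · det(I - αB), where ‖·‖ denotes the operator norm. -/
/-!
If `μᵢ ∈ [0, 1]` are the eigenvalues of `B`, then `I - αB = f(B)` for `f x = 1 - α x`, whose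
eigenvalues `1 - α μᵢ` lie in `[1 - α, 1]`. Hence `‖I - αB‖ ≤ 1`, while the Weierstrass product
inequality and `∑ μᵢ = tr B = 1` give `det (I - αB) = ∏ (1 - α μᵢ) ≥ 1 - α = 1 / K`.
-/

open Finset

theorem Finset.one_sub_sum_le_prod_one_sub {ι R : Type*} [CommRing R] [PartialOrder R]
    [IsOrderedRing R] (s : Finset ι) (f : ι → R)
    (h0 : ∀ i ∈ s, 0 ≤ f i) (h1 : ∀ i ∈ s, f i ≤ 1) :
    1 - ∑ i ∈ s, f i ≤ ∏ i ∈ s, (1 - f i) := by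
  induction s using Finset.cons_induction with
  | empty => simp
  | cons a s ha ih =>
    rw [prod_cons, sum_cons]
    have hfa0 := h0 a (mem_cons_self a s)
    have hfa1 : 0 ≤ 1 - f a := sub_nonneg.2 (h1 a (mem_cons_self a s))
    have hsum : 0 ≤ ∑ i ∈ s, f i := sum_nonneg fun i hi ↦ h0 i (mem_cons_of_mem hi)
    have ih' := ih (fun i hi ↦ h0 i (mem_cons_of_mem hi)) (fun i hi ↦ h1 i (mem_cons_of_mem hi))
    calc 1 - (f a + ∑ i ∈ s, f i) ≤ (1 - f a) * (1 - ∑ i ∈ s, f i) := by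
          rw [← sub_nonneg]
          convert mul_nonneg hfa0 hsum using 1
          ring
      _ ≤ (1 - f a) * ∏ i ∈ s, (1 - f i) := mul_le_mul_of_nonneg_left ih' hfa1

namespace Matrix.IsHermitian

variable {n 𝕜 : Type*} [Fintype n] [DecidableEq n] [RCLike 𝕜] {A : Matrix n n 𝕜}

theorem det_cfc (hA : A.IsHermitian) (f : ℝ → ℝ) :
    (cfc f A).det = ∏ i, (f (hA.eigenvalues i) : 𝕜) := by
  simp [hA.cfc_eq, IsHermitian.cfc, -Unitary.conjStarAlgAut_apply]

open scoped Matrix.Norms.L2Operator in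
theorem norm_toEuclideanCLM_cfc_le (hA : A.IsHermitian) (f : ℝ → ℝ) {c : ℝ} (hc : 0 ≤ c)
    (h : ∀ i, |f (hA.eigenvalues i)| ≤ c) :
    ‖toEuclideanCLM (𝕜 := 𝕜) (cfc f A)‖ ≤ c := by
  rw [← cstar_norm_def, hA.cfc_eq, IsHermitian.cfc, Unitary.conjStarAlgAut_apply,
    ← Unitary.coe_star, CStarRing.norm_mul_coe_unitary, CStarRing.norm_coe_unitary_mul, l2_opNorm_diagonal]
  refine pi_norm_le_iff_of_nonneg hc |>.2 fun i ↦ ?_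
  simpa using h i

end Matrix.IsHermitian

theorem cfc_one_sub_smul {A : Type*} [Ring A] [Algebra ℝ A] [TopologicalSpace A] [StarRing A]
    [ContinuousFunctionalCalculus ℝ A IsSelfAdjoint] (c : ℝ) {a : A}
    (ha : IsSelfAdjoint a) : cfc (fun x ↦ 1 - c * x) a = 1 - c • a := by
  rw [cfc_sub .., cfc_const_one .., cfc_const_mul_id ..]

theorem distortion_inequality_general (d : ℕ) (K : ℝ) (hK : 1 < K) (α : ℝ) (hα : α = 1 - 1 / K)
    (B : Matrix (Fin d) (Fin d) ℝ) (hB : B.PosSemidef) (htr : B.trace = 1) :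
    ‖Matrix.toEuclideanCLM (𝕜 := ℝ) ((1 - α • B : Matrix (Fin d) (Fin d) ℝ))‖ ^ d ≤ K * (1 - α • B).det := by
  set μ := hB.isHermitian.eigenvalues
  have hμ_sum : ∑ i, μ i = 1 := by simpa [htr] using hB.isHermitian.trace_eq_sum_eigenvalues.symm
  have hα0 : 0 ≤ α := by rw [hα, sub_nonneg]; exact div_le_one_of_le₀ hK.le (by linarith)
  have hα1 : α ≤ 1 := by rw [hα]; linarith [one_div_pos.2 (zero_lt_one.trans hK)]
  have hαμ : ∀ i, 0 ≤ α * μ i ∧ α * μ i ≤ 1 := fun i ↦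
    have hμ0 : ∀ j, 0 ≤ μ j := hB.eigenvalues_nonneg
    have hμ1 : μ i ≤ 1 := hμ_sum ▸ single_le_sum (fun j _ ↦ hμ0 j) (mem_univ i)
    ⟨mul_nonneg hα0 (hμ0 i), mul_le_one₀ hα1 (hμ0 i) hμ1⟩
  rw [← cfc_one_sub_smul α hB.isHermitian.isSelfAdjoint]
  have hnorm : ‖Matrix.toEuclideanCLM (𝕜 := ℝ) (cfc (fun x ↦ 1 - α * x) B)‖ ≤ 1 :=
    hB.isHermitian.norm_toEuclideanCLM_cfc_le _ zero_le_one fun i ↦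
      abs_le.2 ⟨by linarith [hαμ i], by linarith [hαμ i]⟩
  have hdet : 1 - α ≤ (cfc (fun x ↦ 1 - α * x) B).det := by
    rw [hB.isHermitian.det_cfc]
    calc 1 - α = 1 - ∑ i, α * μ i := by rw [← mul_sum, hμ_sum, mul_one]
      _ ≤ ∏ i, (1 - α * μ i) :=
        one_sub_sum_le_prod_one_sub _ _ (fun i _ ↦ (hαμ i).1) (fun i _ ↦ (hαμ i).2)
  calc _ ≤ (1 : ℝ) := pow_le_one₀ (norm_nonneg _) hnorm
    _ = K * (1 - α) := by rw [hα]; field_simp; ring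
    _ ≤ _ := mul_le_mul_of_nonneg_left hdet (by linarith)

theorem distortion_inequality (d : ℕ) (K : ℝ) (hK : 1 < K) (α : ℝ) (hα : α = 1 - 1 / K)
    (B : Matrix (Fin d) (Fin d) ℝ) (hB : B.PosSemidef) (htr : B.trace = 1)
    (hnorm : ‖Matrix.toEuclideanCLM (𝕜 := ℝ) B‖ ≤ 1) :
    ‖Matrix.toEuclideanCLM (𝕜 := ℝ) ((1 - α • B : Matrix (Fin d) (Fin d) ℝ))‖ ^ d ≤ K * (1 - α • B).det :=
  distortion_inequality_general d K hK α hα B hB htr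
end

section
/- Let K > 1, let Λ = {λ_1, λ_2, ...} ⊂ ℝ^d be bounded and countable, and F_Λ(x) = ∑_n 2^{-n}(x - λ_n)|x - λ_n|^{1/K - 1}. Then F_Λ is injective. -/
/-!
With `α = 1/K > 0`, the radial stretch `S x = ‖x‖^(α-1) x` is strictly monotone:
`⟪S a - S b, a - b⟫ > 0` for `a ≠ b`. For equal norms this inner product is a positive multiple of
`‖a - b‖²`; otherwise Cauchy–Schwarz bounds it below by `(‖a‖^α - ‖b‖^α)(‖a‖ - ‖b‖) > 0`.
Since `Λ` is bounded, `F_Λ x = ∑ 2^(-n-1) S (x - λₙ)` converges absolutely, so it is strictly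
monotone as well, and a strictly monotone map is injective.
-/

open scoped RealInnerProductSpace

section

variable {E : Type*} [NormedAddCommGroup E] [InnerProductSpace ℝ E]

noncomputable def radialStretch (α : ℝ) (x : E) : E := ‖x‖ ^ (α - 1) • x

lemma rpow_sub_one_mul_self {p α : ℝ} (hp : 0 ≤ p) (hα : 0 < α) : p ^ (α - 1) * p = p ^ α := by
  rcases hp.eq_or_lt with rfl | hp
  · rw [mul_zero, Real.zero_rpow hα.ne']
  · rw [Real.rpow_sub_one hp.ne', div_mul_cancel₀ _ hp.ne']

lemma norm_radialStretch {α : ℝ} (hα : 0 < α) (x : E) : ‖radialStretch α x‖ = ‖x‖ ^ α := by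
  rw [radialStretch, norm_smul, Real.norm_of_nonneg (by positivity),
    rpow_sub_one_mul_self (norm_nonneg x) hα]

lemma inner_radialStretch_sub_pos {α : ℝ} (hα : 0 < α) {a b : E} (hab : a ≠ b) :
    0 < ⟪radialStretch α a - radialStretch α b, a - b⟫ := by
  rcases eq_or_ne ‖a‖ ‖b‖ with hab_norm | hab_norm
  · have ha : 0 < ‖a‖ := by
      by_contra! h
      exact hab ((norm_le_zero_iff.mp h).trans (norm_le_zero_iff.mp (hab_norm ▸ h)).symm)
    have hdiff : 0 < ‖a - b‖ := norm_pos_iff.mpr (sub_ne_zero.mpr hab)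
    rw [radialStretch, radialStretch, ← hab_norm, ← smul_sub, real_inner_smul_left,
      real_inner_self_eq_norm_sq]
    positivity
  · set p := ‖a‖
    set q := ‖b‖
    have hexpand : ⟪radialStretch α a - radialStretch α b, a - b⟫
        = p ^ (α - 1) * p ^ 2 + q ^ (α - 1) * q ^ 2 - (p ^ (α - 1) + q ^ (α - 1)) * ⟪a, b⟫ := by
      simp only [radialStretch, inner_sub_left, inner_sub_right, real_inner_smul_left,
        real_inner_self_eq_norm_sq, real_inner_comm a b]
      ring
    have hcs : (p ^ (α - 1) + q ^ (α - 1)) * ⟪a, b⟫ ≤ (p ^ (α - 1) + q ^ (α - 1)) * (p * q) :=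
      mul_le_mul_of_nonneg_left (real_inner_le_norm a b) (by positivity)
    have hfactor : p ^ (α - 1) * p ^ 2 + q ^ (α - 1) * q ^ 2 - (p ^ (α - 1) + q ^ (α - 1)) * (p * q)
        = (p ^ α - q ^ α) * (p - q) := by
      rw [← rpow_sub_one_mul_self (norm_nonneg a) hα, ← rpow_sub_one_mul_self (norm_nonneg b) hα]
      ring
    have h1d : 0 < (p ^ α - q ^ α) * (p - q) := by
      rcases hab_norm.lt_or_gt with h | h
      · exact mul_pos_of_neg_of_neg (sub_neg.mpr (Real.rpow_lt_rpow (norm_nonneg a) h hα))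
          (sub_neg.mpr h)
      · exact mul_pos (sub_pos.mpr (Real.rpow_lt_rpow (norm_nonneg b) h hα)) (sub_pos.mpr h)
    linarith

lemma injective_of_inner_sub_pos {F : E → E} (hF : ∀ x y, x ≠ y → 0 < ⟪F x - F y, x - y⟫) :
    Function.Injective F := fun x y hxy => by
  by_contra hne
  simpa [hxy] using hF x y hne

lemma summable_smul_radialStretch_sub [CompleteSpace E] {ι : Type*} {w : ι → ℝ} (hw : Summable w)
    {α : ℝ} (hα : 0 < α) {c : ι → E} {M : ℝ} (hc : ∀ i, ‖c i‖ ≤ M) (x : E) :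
    Summable fun i => w i • radialStretch α (x - c i) := by
  refine Summable.of_norm_bounded (hw.abs.mul_right ((‖x‖ + M) ^ α)) fun i => ?_
  rw [norm_smul, norm_radialStretch hα, Real.norm_eq_abs]
  gcongr
  exact (norm_sub_le _ _).trans (by linarith [hc i])

lemma inner_tsum_sub_tsum_pos {ι : Type*} [Nonempty ι] (G : ι → E → E) {x y : E}
    (hx : Summable fun i => G i x) (hy : Summable fun i => G i y)
    (hG : ∀ i, 0 < ⟪G i x - G i y, x - y⟫) :
    0 < ⟪∑' i, G i x - ∑' i, G i y, x - y⟫ := by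
  obtain ⟨i⟩ := ‹Nonempty ι›
  rw [← hx.tsum_sub hy, ← innerSLFlip_apply_apply,
    (innerSLFlip ℝ (x - y)).map_tsum (hx.sub hy)]
  refine ((hx.sub hy).mapL _).tsum_pos (fun j => ?_) i ?_ <;>
    simp only [innerSLFlip_apply_apply]
  exacts [(hG j).le, hG i]

end

theorem F_Lambda_injective (d : ℕ) (K : ℝ) (hK : 1 < K)
    (lam : ℕ → EuclideanSpace ℝ (Fin d)) (hbdd : ∃ M : ℝ, ∀ n, ‖lam n‖ ≤ M)
    (F : EuclideanSpace ℝ (Fin d) → EuclideanSpace ℝ (Fin d))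
    (hF : F = fun x => ∑' n : ℕ,
        ((2 : ℝ) ^ (n + 1))⁻¹ • (‖x - lam n‖ ^ (1 / K - 1 : ℝ) • (x - lam n))) :
    Function.Injective F := by
  obtain ⟨M, hM⟩ := hbdd
  have hα : 0 < 1 / K := one_div_pos.mpr (by linarith)
  have hw : Summable fun n : ℕ => ((2 : ℝ) ^ (n + 1))⁻¹ :=
    (summable_geometric_two' 1).congr fun n => by ring
  have hsum := summable_smul_radialStretch_sub hw hα hM
  rw [show F = fun x => ∑' n : ℕ, ((2 : ℝ) ^ (n + 1))⁻¹ • radialStretch (1 / K) (x - lam n) from hF]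
  refine injective_of_inner_sub_pos fun x y hne =>
    inner_tsum_sub_tsum_pos (fun n z => ((2 : ℝ) ^ (n + 1))⁻¹ • radialStretch (1 / K) (z - lam n))
      (hsum x) (hsum y) fun n => ?_
  rw [← smul_sub, real_inner_smul_left]
  refine mul_pos (by positivity) ?_
  simpa only [sub_sub_sub_cancel_right] using
    inner_radialStretch_sub_pos hα (sub_left_injective.ne hne)
end
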